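/- arXiv:2206.01157 — 8 statements merged into one kernel-verified Lean document; each statement's English description precedes it below -/
import Mathlib

section
/- Given a generalized metric 𝒢 on E = g ⊕ g* (symmetric bilinear form whose associated endomorphism 𝒢^end = 𝒢^{-1} ∘ ⟨·,·⟩ is an involution and whose restriction to Sym²g* is nondegenerate), there exist a nondegenerate symmetric bilinear form g ∈ Sym²g* and a 2-form β ∈ Λ²g* such that 𝒢 = exp(−B)* 𝒢_g, where B is the endomorphism X+ξ ↦ βX of E and 𝒢_g(X+ξ, Y+η) = (1/2)(g(X,Y) + g^{-1}(ξ,η)). In particular, any generalized metric is the pullback of one induced by a pseudo-Riemannian metric under a B-field transformation. -/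
/-!
Write `𝒢^end (X, ξ) = (A X + b ξ, …)` in block form. Symmetry of `𝒢` makes `b : g* → g`
symmetric and the lower-right block equal to `Aᵀ`; the restriction to `Sym² g*` is
`η(b ξ)/2`, so nondegeneracy makes `b` invertible, and `g := b⁻¹`, `β := -g ∘ A` are the
candidates. The first component of `(𝒢^end)² = 1` gives `A b + b Aᵀ = 0`, i.e. `β` is skew,
and it also recovers the second component of `𝒢^end u` as `g (X - A (𝒢^end u).1)`;
meanwhile `g⁻¹(ξ - β X) = (𝒢^end u).1`, which turns `⟨𝒢^end u, v⟩` into the normal form.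
-/

open Module

section PairingSelfAdjoint

variable {R V : Type*} [CommRing R] [AddCommGroup V] [Module R V]

/-- Self-adjointness for twice the canonical pairing `⟨X + ξ, Y + η⟩ = (ξ Y + η X) / 2`. -/
def IsPairingSelfAdjoint (T : (V × Dual R V) →ₗ[R] (V × Dual R V)) : Prop :=
  ∀ u v, (T u).2 v.1 + v.2 (T u).1 = (T v).2 u.1 + u.2 (T v).1

def blockVV (T : (V × Dual R V) →ₗ[R] (V × Dual R V)) : V →ₗ[R] V :=
  LinearMap.fst R V (Dual R V) ∘ₗ T ∘ₗ LinearMap.inl R V (Dual R V)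

def blockDV (T : (V × Dual R V) →ₗ[R] (V × Dual R V)) : Dual R V →ₗ[R] V :=
  LinearMap.fst R V (Dual R V) ∘ₗ T ∘ₗ LinearMap.inr R V (Dual R V)

variable {T : (V × Dual R V) →ₗ[R] (V × Dual R V)}

theorem blockVV_apply (X : V) : blockVV T X = (T (X, 0)).1 := rfl

theorem blockDV_apply (ξ : Dual R V) : blockDV T ξ = (T (0, ξ)).1 := rfl

theorem fst_apply_eq_blockVV_add_blockDV (u : V × Dual R V) :
    (T u).1 = blockVV T u.1 + blockDV T u.2 := by
  conv_lhs => rw [← Prod.fst_add_snd u, map_add]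
  rfl

namespace IsPairingSelfAdjoint

variable (hT : IsPairingSelfAdjoint T)
include hT

theorem snd_apply_inr (ξ : Dual R V) (Y : V) : (T (0, ξ)).2 Y = ξ (blockVV T Y) := by
  simpa [blockVV_apply] using hT (0, ξ) (Y, 0)

theorem blockDV_symm (ξ η : Dual R V) : η (blockDV T ξ) = ξ (blockDV T η) := by
  simpa [blockDV_apply] using hT (0, ξ) (0, η)

theorem blockVV_comp_blockDV_skew (hinv : ∀ u, T (T u) = u) (ξ η : Dual R V) :
    η (blockVV T (blockDV T ξ)) = -ξ (blockVV T (blockDV T η)) := by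
  have hfst : blockVV T (blockDV T ξ) + blockDV T (T (0, ξ)).2 = 0 := by
    have h := fst_apply_eq_blockVV_add_blockDV (T := T) (T (0, ξ))
    rw [hinv] at h
    exact h.symm
  rw [eq_neg_of_add_eq_zero_left hfst, map_neg, hT.blockDV_symm, hT.snd_apply_inr]

variable {g : V ≃ₗ[R] Dual R V} (hg : ∀ ξ, g.symm ξ = blockDV T ξ)
include hg

theorem symm_of_symm_eq_blockDV (x y : V) : g x y = g y x := by
  simpa [← hg] using hT.blockDV_symm (g y) (g x)

theorem blockVV_skew_of_symm_eq_blockDV (hinv : ∀ u, T (T u) = u) (x y : V) :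
    g (blockVV T x) y = -g (blockVV T y) x := by
  have hdual := hT.blockVV_comp_blockDV_skew hinv (g x) (g y)
  simp only [← hg, LinearEquiv.symm_apply_apply] at hdual
  rw [hT.symm_of_symm_eq_blockDV hg, hdual, hT.symm_of_symm_eq_blockDV hg]

end IsPairingSelfAdjoint

theorem snd_apply_eq_of_symm_eq_blockDV (hinv : ∀ u, T (T u) = u) {g : V ≃ₗ[R] Dual R V}
    (hg : ∀ ξ, g.symm ξ = blockDV T ξ) (u : V × Dual R V) :
    (T u).2 = g (u.1 - blockVV T (T u).1) := by
  have hfst := fst_apply_eq_blockVV_add_blockDV (T := T) (T u)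
  rw [hinv, ← hg] at hfst
  rw [hfst, add_sub_cancel_left, LinearEquiv.apply_symm_apply]

theorem IsPairingSelfAdjoint.exists_normal_form (hT : IsPairingSelfAdjoint T)
    (hinv : ∀ u, T (T u) = u) (hb : Function.Bijective (blockDV T)) :
    ∃ (g : V ≃ₗ[R] Dual R V) (β : V →ₗ[R] Dual R V),
      (∀ x y : V, g x y = g y x) ∧
      (∀ x y : V, β x y = -β y x) ∧
      ∀ (X Y : V) (ξ η : Dual R V),
        (T (X, ξ)).2 Y + η (T (X, ξ)).1 = g X Y + (η - β Y) (g.symm (ξ - β X)) := by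
  set g := (LinearEquiv.ofBijective (blockDV T) hb).symm
  have hg : ∀ ξ, g.symm ξ = blockDV T ξ := fun _ => rfl
  have hskew := hT.blockVV_skew_of_symm_eq_blockDV hg hinv
  refine ⟨g, -(g.toLinearMap ∘ₗ blockVV T), hT.symm_of_symm_eq_blockDV hg, ?_, ?_⟩
  · intro x y
    simp [hskew x y]
  · intro X Y ξ η
    have hfst : g.symm (ξ + g (blockVV T X)) = (T (X, ξ)).1 := by
      rw [map_add, LinearEquiv.symm_apply_apply, hg, fst_apply_eq_blockVV_add_blockDV, add_comm]
    simp only [LinearMap.neg_apply, LinearMap.comp_apply, LinearEquiv.coe_coe, sub_neg_eq_add,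
      hfst, LinearMap.add_apply]
    rw [snd_apply_eq_of_symm_eq_blockDV hinv hg, map_sub, LinearMap.sub_apply, hskew]
    ring

end PairingSelfAdjoint

theorem generalized_metric_normal_form
    {V : Type*} [AddCommGroup V] [Module ℝ V] [FiniteDimensional ℝ V]
    (𝒢 : (V × Module.Dual ℝ V) →ₗ[ℝ] (V × Module.Dual ℝ V) →ₗ[ℝ] ℝ)
    (Gend : (V × Module.Dual ℝ V) →ₗ[ℝ] (V × Module.Dual ℝ V))
    (hsymm : ∀ u v, 𝒢 u v = 𝒢 v u)
    (hend : ∀ u v, ((Gend u).2 v.1 + v.2 (Gend u).1) / 2 = 𝒢 u v)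
    (hinv : ∀ u, Gend (Gend u) = u)
    (hnd : ∀ ξ : Module.Dual ℝ V,
      (∀ η : Module.Dual ℝ V, 𝒢 (0, ξ) (0, η) = 0) → ξ = 0) :
    ∃ (g : V ≃ₗ[ℝ] Module.Dual ℝ V) (β : V →ₗ[ℝ] Module.Dual ℝ V),
      (∀ x y : V, g x y = g y x) ∧
      (∀ x y : V, β x y = - β y x) ∧
      ∀ (X Y : V) (ξ η : Module.Dual ℝ V),
        𝒢 (X, ξ) (Y, η)
          = (g X Y + (η - β Y) (g.symm (ξ - β X))) / 2 := by
  have hT : IsPairingSelfAdjoint Gend := fun u v => by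
    linarith [hend u v, hend v u, hsymm u v]
  have hinj : Function.Injective (blockDV Gend) := by
    refine (injective_iff_map_eq_zero _).2 fun ξ hξ => hnd ξ fun η => ?_
    rw [← hend]
    simp [show (Gend (0, ξ)).1 = 0 from hξ]
  have hb : Function.Bijective (blockDV Gend) :=
    ⟨hinj, (LinearMap.injective_iff_surjective_of_finrank_eq_finrank
      Subspace.dual_finrank_eq).1 hinj⟩
  obtain ⟨g, β, hg, hβ, hform⟩ := hT.exists_normal_form hinv hb
  exact ⟨g, β, hg, hβ, fun X Y ξ η => by rw [← hend, hform]⟩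
end

section
/- Let (V, ⟨·,·⟩) be a finite-dimensional quadratic vector space. The generalized first prolongation so(V)^⟨1⟩, defined as the kernel of the map ∂: V* ⊗ so(V) → Λ³V* given by (∂α)(u,v,w) = Σ_cyclic ⟨α_u v, w⟩, equals the image of the map alt: Sym²V* ⊗ V* → V* ⊗ so(V) defined by ⟨alt(σ)_u v, w⟩ = σ(u,v,w) − σ(u,w,v); consequently so(V)^⟨1⟩ is isomorphic to (Sym²V ⊗ V)/Sym³V. -/
/-!
Write `T u v w = B (A u v) w`; skewness of `A u` makes `T` skew in its last two arguments.
If `σ` is symmetric in its first two arguments, the cyclic sum of `σ u v w - σ u w v`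
cancels in pairs. Conversely, when the cyclic sum of `T` vanishes, `σ := (T + T.flip) / 3`
works: `σ u v w - σ u w v` equals `T u v w` minus a third of the cyclic sum.
-/

namespace LinearMap

variable {R M : Type*} [CommRing R] [AddCommGroup M] [Module R M]

theorem cyclic_sum_alt_eq_zero {σ : M →ₗ[R] M →ₗ[R] M →ₗ[R] R}
    (hσ : ∀ u v, σ u v = σ v u) (u v w : M) :
    (σ u v w - σ u w v) + (σ v w u - σ v u w) + (σ w u v - σ w v u) = 0 := by
  rw [hσ v u, hσ w v, hσ u w]
  ring

theorem eq_alt_symmetrization_of_cyclic_sum_eq_zero [Invertible (3 : R)]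
    {T : M →ₗ[R] M →ₗ[R] M →ₗ[R] R} (hskew : ∀ u v w, T u v w = -T u w v)
    (hcyc : ∀ u v w, T u v w + T v w u + T w u v = 0) (u v w : M) :
    T u v w = ((⅟3 : R) • (T + T.flip)) u v w - ((⅟3 : R) • (T + T.flip)) u w v := by
  simp only [smul_apply, add_apply, flip_apply, smul_eq_mul]
  linear_combination (⅟3 : R) * (hskew u w v + hcyc u v w - hskew v u w)
    - T u v w * invOf_mul_self (3 : R)

theorem cyclic_sum_eq_zero_iff_exists_alt [Invertible (3 : R)]
    {T : M →ₗ[R] M →ₗ[R] M →ₗ[R] R} (hskew : ∀ u v w, T u v w = -T u w v) :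
    (∀ u v w, T u v w + T v w u + T w u v = 0) ↔
      ∃ σ : M →ₗ[R] M →ₗ[R] M →ₗ[R] R,
        (∀ u v, σ u v = σ v u) ∧ ∀ u v w, T u v w = σ u v w - σ u w v := by
  refine ⟨fun hcyc => ⟨(⅟3 : R) • (T + T.flip), fun u v => ?_,
    eq_alt_symmetrization_of_cyclic_sum_eq_zero hskew hcyc⟩, ?_⟩
  · simp only [smul_apply, add_apply, flip_apply, add_comm]
  · rintro ⟨σ, hσ, hT⟩ u v w
    rw [hT, hT v, hT w]
    exact cyclic_sum_alt_eq_zero hσ u v w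

end LinearMap

theorem generalized_first_prolongation_eq_image_alt_general
    {V : Type*} [AddCommGroup V] [Module ℝ V]
    (B : V →ₗ[ℝ] V →ₗ[ℝ] ℝ)
    (hsymm : ∀ u v, B u v = B v u)
    (A : V →ₗ[ℝ] V →ₗ[ℝ] V)
    (hskew : ∀ u v w, B (A u v) w = - B v (A u w)) :
    (∀ u v w, B (A u v) w + B (A v w) u + B (A w u) v = 0) ↔
      ∃ σ : V →ₗ[ℝ] V →ₗ[ℝ] V →ₗ[ℝ] ℝ,
        (∀ u v, σ u v = σ v u) ∧
        ∀ u v w, B (A u v) w = σ u v w - σ u w v :=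
  LinearMap.cyclic_sum_eq_zero_iff_exists_alt (T := A.compr₂ B) fun u v w => by
    simp only [LinearMap.compr₂_apply, hskew u v w, hsymm v]

theorem generalized_first_prolongation_eq_image_alt
    {V : Type*} [AddCommGroup V] [Module ℝ V] [FiniteDimensional ℝ V]
    (B : V →ₗ[ℝ] V →ₗ[ℝ] ℝ)
    (hsymm : ∀ u v, B u v = B v u)
    (hnd : ∀ u, (∀ v, B u v = 0) → u = 0)
    (A : V →ₗ[ℝ] V →ₗ[ℝ] V)
    (hskew : ∀ u v w, B (A u v) w = - B v (A u w)) :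
    (∀ u v w, B (A u v) w + B (A v w) u + B (A w u) v = 0) ↔
      ∃ σ : V →ₗ[ℝ] V →ₗ[ℝ] V →ₗ[ℝ] ℝ,
        (∀ u v, σ u v = σ v u) ∧
        ∀ u v w, B (A u v) w = σ u v w - σ u w v :=
  generalized_first_prolongation_eq_image_alt_general B hsymm A hskew
end

section
/- Let (V, ⟨·,·⟩) be a quadratic vector space of dimension n ≥ 2, and for α, β ∈ V* define S = alt(α²⊗β) ∈ so(V)^⟨1⟩ where ⟨alt(σ)_u v, w⟩ = σ(u,v,w) − σ(u,w,v). Then the linear form λ_S(v) = tr(u ↦ S_u v) equals ⟨α,β⟩α − ⟨α,α⟩β, and consequently the map S ↦ λ_S from so(V)^⟨1⟩ to V* is surjective. -/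
open LinearMap

private lemma trace_smulRight_eq {V : Type*} [AddCommGroup V] [Module ℝ V]
    [FiniteDimensional ℝ V] (f : V →ₗ[ℝ] ℝ) (x : V) :
    trace ℝ V (f.smulRight x) = f x := by
  have h : f.smulRight x = dualTensorHom ℝ V V (f ⊗ₜ[ℝ] x) := by ext u; simp
  rw [h, trace_eq_contract_apply]; simp

/-!
STATEMENT 6: Let `(V, B)` be a quadratic vector space of dimension `n ≥ 2`.  Identifying
`V* ≅ V` via `B`, take `α = B a`, `β = B b` for vectors `a, b` (so that the induced form on
`V*` satisfies `⟨α,β⟩ = B a b`).  Let `S = alt(α² ⊗ β)`, i.e. the bilinear map `S` with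
`B (S u v) w = α(u)α(v)β(w) − α(u)α(w)β(v)`.  Then the linear form
`λ_S(v) = tr (u ↦ S_u v)` equals `⟨α,β⟩ α − ⟨α,α⟩ β`, i.e.
`λ_S v = (B a b)(B a v) − (B a a)(B b v)`.  Consequently the map `S ↦ λ_S` from
`so(V)^⟨1⟩` (elements of `V* ⊗ so(V)` killed by the cyclic-sum map `∂`) to `V*` is
surjective.
-/
theorem prolongation_divergence_formula_and_surjectivity
    {V : Type*} [AddCommGroup V] [Module ℝ V] [FiniteDimensional ℝ V]
    (hdim : 2 ≤ Module.finrank ℝ V)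
    (B : V →ₗ[ℝ] V →ₗ[ℝ] ℝ)
    (hsymm : ∀ u v, B u v = B v u)
    (hnd : ∀ u, (∀ v, B u v = 0) → u = 0) :
    -- the formula `λ_S = ⟨α,β⟩ α − ⟨α,α⟩ β` for `S = alt(α² ⊗ β)`, `α = B a`, `β = B b`:
    (∀ (a b : V) (S : V →ₗ[ℝ] V →ₗ[ℝ] V),
      (∀ u v w, B (S u v) w = (B a u) * ((B a v) * (B b w)) - (B a u) * ((B a w) * (B b v))) →
      ∀ v : V, LinearMap.trace ℝ V (S.flip v) = (B a b) * (B a v) - (B a a) * (B b v)) ∧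
    -- consequently, `S ↦ λ_S` is surjective from `so(V)^⟨1⟩` onto `V*`:
    (∀ δ : Module.Dual ℝ V, ∃ S : V →ₗ[ℝ] V →ₗ[ℝ] V,
      (∀ u v w, B (S u v) w = - B v (S u w)) ∧
      (∀ u v w, B (S u v) w + B (S v w) u + B (S w u) v = 0) ∧
      ∀ v : V, LinearMap.trace ℝ V (S.flip v) = δ v) := by
  classical
  -- Part 1: the divergence formula
  have h1 : ∀ (a b : V) (S : V →ₗ[ℝ] V →ₗ[ℝ] V),
      (∀ u v w, B (S u v) w = (B a u) * ((B a v) * (B b w)) - (B a u) * ((B a w) * (B b v))) →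
      ∀ v : V, LinearMap.trace ℝ V (S.flip v) = (B a b) * (B a v) - (B a a) * (B b v) := by
    intro a b S hS v
    have hflip : S.flip v = (B a).smulRight ((B a v) • b - (B b v) • a) := by
      ext u
      have key : ∀ w, B (S u v - (B a u) • ((B a v) • b - (B b v) • a)) w = 0 := by
        intro w
        simp only [map_sub, map_smul, LinearMap.sub_apply, LinearMap.smul_apply, smul_eq_mul, hS u v w]
        ring
      have h0 := hnd _ key
      have h' : S u v = (B a u) • ((B a v) • b - (B b v) • a) := sub_eq_zero.mp h0
      simp [h']
    rw [hflip, trace_smulRight_eq]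
    simp only [map_sub, map_smul, smul_eq_mul]
    ring
  refine ⟨h1, ?_⟩
  intro δ
  -- B is bijective onto the dual
  have hinj : Function.Injective B := by
    intro u u' h
    exact sub_eq_zero.mp (hnd _ (fun v => by simp [map_sub, h]))
  have hsurj : Function.Surjective B :=
    (LinearMap.injective_iff_surjective_of_finrank_eq_finrank
      (Subspace.dual_finrank_eq (K := ℝ) (V := V)).symm).mp hinj
  obtain ⟨d, hd⟩ := hsurj δ
  -- there is an anisotropic vector
  have haniso : ∃ a : V, B a a ≠ 0 := by
    by_contra h
    push_neg at h
    have hall : ∀ u v : V, B u v = 0 := by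
      intro u v
      have h1' := h (u + v)
      have h2 := h u
      have h3 := h v
      have hs := hsymm u v
      simp only [map_add, LinearMap.add_apply] at h1'
      linarith
    have hz : ∀ u : V, u = 0 := fun u => hnd u (hall u)
    have : Subsingleton V := ⟨fun x y => by rw [hz x, hz y]⟩
    have : Module.finrank ℝ V = 0 := Module.finrank_zero_of_subsingleton
    omega
  obtain ⟨a₁, ha₁⟩ := haniso
  -- there is an anisotropic vector orthogonal to a₁
  have haniso2 : ∃ a₂ : V, B a₁ a₂ = 0 ∧ B a₂ a₂ ≠ 0 := by
    by_contra h
    push_neg at h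
    have hWW : ∀ u v : V, B a₁ u = 0 → B a₁ v = 0 → B u v = 0 := by
      intro u v hu hv
      have h1' := h (u + v) (by simp [hu, hv])
      have h2 := h u hu
      have h3 := h v hv
      have hs := hsymm u v
      simp only [map_add, LinearMap.add_apply] at h1'
      linarith
    have hker : LinearMap.ker (B a₁) ≠ ⊥ := by
      intro hk
      have hr := LinearMap.finrank_range_add_finrank_ker (B a₁)
      have h1' : Module.finrank ℝ (LinearMap.range (B a₁)) ≤ Module.finrank ℝ ℝ :=
        Submodule.finrank_le _
      have h2 : Module.finrank ℝ (LinearMap.ker (B a₁)) = 0 := by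
        rw [hk]; simp
      simp [Module.finrank_self] at h1'
      omega
    obtain ⟨w, hw, hw0⟩ := Submodule.exists_mem_ne_zero_of_ne_bot hker
    have hw' : B a₁ w = 0 := hw
    apply hw0
    apply hnd
    intro v
    have hv' : B a₁ (v - (B a₁ v / B a₁ a₁) • a₁) = 0 := by
      simp only [map_sub, map_smul, smul_eq_mul]
      field_simp; ring
    have hmain := hWW w (v - (B a₁ v / B a₁ a₁) • a₁) hw' hv'
    have hwa : B w a₁ = 0 := by rw [hsymm w a₁]; exact hw'
    have e : B w (v - (B a₁ v / B a₁ a₁) • a₁) = B w v - (B a₁ v / B a₁ a₁) * B w a₁ := by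
      simp [map_sub, map_smul, smul_eq_mul]
    rw [e, hwa] at hmain
    linarith
  obtain ⟨a₂, ho, ha₂⟩ := haniso2
  obtain ⟨s, hs⟩ : ∃ x : ℝ, x = B d a₁ / B a₁ a₁ := ⟨_, rfl⟩
  obtain ⟨b₁, hb₁⟩ : ∃ x : V, x = -(B a₁ a₁)⁻¹ • (d - s • a₁) := ⟨_, rfl⟩
  obtain ⟨b₂, hb₂⟩ : ∃ x : V, x = -(B a₂ a₂)⁻¹ • (s • a₁) := ⟨_, rfl⟩
  -- the basic building block `alt(α² ⊗ β)`
  let Sab : V → V → (V →ₗ[ℝ] V →ₗ[ℝ] V) := fun a b =>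
    (B a).smulRight ((B a).smulRight b - (B b).smulRight a)
  have hSab : ∀ a b u v w, B ((Sab a b) u v) w
      = (B a u) * ((B a v) * (B b w)) - (B a u) * ((B a w) * (B b v)) := by
    intro a b u v w
    simp only [Sab, smulRight_apply, LinearMap.smul_apply, LinearMap.sub_apply, map_smul, map_sub, smul_eq_mul]
    ring
  refine ⟨Sab a₁ b₁ + Sab a₂ b₂, ?_, ?_, ?_⟩
  · intro u v w
    rw [hsymm v ((Sab a₁ b₁ + Sab a₂ b₂) u w)]
    simp only [LinearMap.add_apply, map_add]
    rw [hSab a₁ b₁ u v w, hSab a₂ b₂ u v w, hSab a₁ b₁ u w v, hSab a₂ b₂ u w v]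
    ring
  · intro u v w
    simp only [LinearMap.add_apply, map_add]
    rw [hSab a₁ b₁ u v w, hSab a₂ b₂ u v w, hSab a₁ b₁ v w u, hSab a₂ b₂ v w u,
      hSab a₁ b₁ w u v, hSab a₂ b₂ w u v]
    ring
  · intro v
    have hflipadd : (Sab a₁ b₁ + Sab a₂ b₂).flip v
        = (Sab a₁ b₁).flip v + (Sab a₂ b₂).flip v := by
      ext u; simp
    rw [hflipadd, map_add, h1 a₁ b₁ (Sab a₁ b₁) (hSab a₁ b₁) v,
      h1 a₂ b₂ (Sab a₂ b₂) (hSab a₂ b₂) v, ← hd]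
    have hda : B a₁ d = B d a₁ := hsymm a₁ d
    have h21 : B a₂ a₁ = 0 := by rw [hsymm a₂ a₁]; exact ho
    simp only [hb₁, hb₂, hs, map_smul, map_sub, smul_eq_mul, neg_smul, map_neg, LinearMap.neg_apply,
      LinearMap.sub_apply, LinearMap.smul_apply, hda, h21]
    field_simp
    ring
end

section
/- Let g be a 3-dimensional Lie algebra with nondegenerate symmetric bilinear form g and orientation, and let L ∈ End(g) be defined by [u,v] = L(u × v), where the cross product satisfies g(u×v, w) = vol_g(u,v,w). Then L is symmetric with respect to g if and only if g is unimodular (i.e., tr(ad_X) = 0 for all X ∈ g). -/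
/-!
STATEMENT 9: Let `g` be a 3-dimensional Lie algebra with nondegenerate symmetric
bilinear form `B` and orientation (encoded by a nonzero volume form `vol`, an alternating
3-form).  Let `cross` be the cross product, `B(u × v, w) = vol(u,v,w)`, and let
`L ∈ End(g)` satisfy `[u,v] = L(u × v)`.  Then `L` is `B`-symmetric iff `g` is unimodular.
-/
theorem structure_endomorphism_symmetric_iff_unimodular
    {g : Type*} [LieRing g] [LieAlgebra ℝ g] [FiniteDimensional ℝ g]
    (hdim : Module.finrank ℝ g = 3)
    (B : g →ₗ[ℝ] g →ₗ[ℝ] ℝ)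
    (hsymm : ∀ u v, B u v = B v u)
    (hnd : ∀ u, (∀ v, B u v = 0) → u = 0)
    (vol : AlternatingMap ℝ g ℝ (Fin 3)) (hvol : vol ≠ 0)
    (cross : g →ₗ[ℝ] g →ₗ[ℝ] g)
    (hcross : ∀ u v w, B (cross u v) w = vol ![u, v, w])
    (L : g →ₗ[ℝ] g)
    (hbr : ∀ u v : g, ⁅u, v⁆ = L (cross u v)) :
    (∀ u v, B (L u) v = B u (L v)) ↔
      ∀ X : g, LinearMap.trace ℝ g (LieAlgebra.ad ℝ g X) = 0 := by
  classical
  -- a basis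
  let f : Module.Basis (Fin 3) ℝ g := Module.finBasisOfFinrankEq ℝ g hdim
  -- `B` as a map to the dual is bijective
  have hinj : Function.Injective B := by
    intro u v huv
    have h : ∀ w, B (u - v) w = 0 := by
      intro w
      rw [map_sub, LinearMap.sub_apply, huv, sub_self]
    exact sub_eq_zero.mp (hnd _ h)
  have hsur : Function.Surjective B :=
    (LinearMap.injective_iff_surjective_of_finrank_eq_finrank
      Subspace.dual_finrank_eq.symm).mp hinj
  let β : g ≃ₗ[ℝ] Module.Dual ℝ g := LinearEquiv.ofBijective B ⟨hinj, hsur⟩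
  -- the `B`-dual basis `eb` of `f` : `B (eb i) v = f.repr v i`
  let eb : Module.Basis (Fin 3) ℝ g := f.dualBasis.map β.symm
  have hBe : ∀ (i : Fin 3) (v : g), B (eb i) v = f.repr v i := by
    intro i v
    have h1 : β (eb i) = f.coord i := by
      show β (β.symm (f.dualBasis i)) = f.coord i
      rw [LinearEquiv.apply_symm_apply, Module.Basis.coe_dualBasis]
    have h2 : B (eb i) v = (β (eb i)) v := rfl
    rw [h2, h1, Module.Basis.coord_apply]
  -- expansion of any vector in the basis `eb`
  have hexp : ∀ x : g, x = ∑ j, B x (f j) • eb j := by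
    intro x
    have h0 : B (x - ∑ j, B x (f j) • eb j) = 0 := by
      apply f.ext
      intro k
      rw [map_sub, LinearMap.sub_apply, LinearMap.zero_apply, map_sum, LinearMap.sum_apply]
      have : ∀ j : Fin 3, (B ((B x (f j)) • eb j)) (f k) =
          (if k = j then B x (f j) else 0) := by
        intro j
        rw [map_smul, LinearMap.smul_apply, smul_eq_mul, hBe, Module.Basis.repr_self,
          Finsupp.single_apply]
        by_cases h : k = j <;> simp [h]
      rw [Finset.sum_congr rfl fun j _ => this j]
      simp
    refine sub_eq_zero.mp (hnd _ fun v => ?_)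
    rw [h0, LinearMap.zero_apply]
  -- cross products of basis vectors
  have hce : ∀ a i : Fin 3, cross (f a) (f i) = ∑ j, vol ![f a, f i, f j] • eb j := by
    intro a i
    conv_lhs => rw [hexp (cross (f a) (f i))]
    exact Finset.sum_congr rfl fun j _ => by rw [hcross]
  -- the symmetric/antisymmetric matrix in question
  set N : Fin 3 → Fin 3 → ℝ := fun i j => B (eb i) (L (eb j)) with hNdef
  -- trace formula
  have key : ∀ a : Fin 3, LinearMap.trace ℝ g ((LieAlgebra.ad ℝ g) (f a)) =
      ∑ i, ∑ j, vol ![f a, f i, f j] * N i j := by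
    intro a
    rw [LinearMap.trace_eq_matrix_trace ℝ f, Matrix.trace]
    refine Finset.sum_congr rfl fun i _ => ?_
    rw [Matrix.diag_apply, LinearMap.toMatrix_apply, LieAlgebra.ad_apply, hbr, hce a i,
      map_sum, map_sum]
    rw [Finset.sum_apply']
    refine Finset.sum_congr rfl fun j _ => ?_
    rw [map_smul, map_smul, Finsupp.smul_apply, smul_eq_mul, ← hBe]
  -- swap and degeneracy lemmas for `vol`
  have hs01 : ∀ u v w : g, vol ![v, u, w] = -vol ![u, v, w] := by
    intro u v w
    have h : (![u, v, w] ∘ Equiv.swap (0 : Fin 3) 1) = ![v, u, w] := by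
      funext k; fin_cases k <;> rfl
    rw [← h, vol.map_swap ![u, v, w] (show (0 : Fin 3) ≠ 1 by decide)]
  have hs12 : ∀ u v w : g, vol ![u, w, v] = -vol ![u, v, w] := by
    intro u v w
    have h : (![u, v, w] ∘ Equiv.swap (1 : Fin 3) 2) = ![u, w, v] := by
      funext k; fin_cases k <;> rfl
    rw [← h, vol.map_swap ![u, v, w] (show (1 : Fin 3) ≠ 2 by decide)]
  have hz01 : ∀ u w : g, vol ![u, u, w] = 0 := fun u w =>
    vol.map_eq_zero_of_eq ![u, u, w] (show ![u, u, w] 0 = ![u, u, w] 1 from rfl)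
      (show (0 : Fin 3) ≠ 1 by decide)
  have hz02 : ∀ u v : g, vol ![u, v, u] = 0 := fun u v =>
    vol.map_eq_zero_of_eq ![u, v, u] (show ![u, v, u] 0 = ![u, v, u] 2 from rfl)
      (show (0 : Fin 3) ≠ 2 by decide)
  have hz12 : ∀ u v : g, vol ![u, v, v] = 0 := fun u v =>
    vol.map_eq_zero_of_eq ![u, v, v] (show ![u, v, v] 1 = ![u, v, v] 2 from rfl)
      (show (1 : Fin 3) ≠ 2 by decide)
  set c : ℝ := vol ![f 0, f 1, f 2] with hcdef
  -- explicit traces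
  have k0 : LinearMap.trace ℝ g ((LieAlgebra.ad ℝ g) (f 0)) = c * (N 1 2 - N 2 1) := by
    rw [key 0]
    simp only [Fin.sum_univ_three, hz01, hz02, hz12, zero_mul, zero_add, add_zero]
    rw [hs12 (f 0) (f 1) (f 2)]
    ring
  have k1 : LinearMap.trace ℝ g ((LieAlgebra.ad ℝ g) (f 1)) = c * (N 2 0 - N 0 2) := by
    rw [key 1]
    simp only [Fin.sum_univ_three, hz01, hz02, hz12, zero_mul, zero_add, add_zero]
    rw [hs12 (f 1) (f 0) (f 2), hs01 (f 0) (f 1) (f 2)]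
    ring
  have k2 : LinearMap.trace ℝ g ((LieAlgebra.ad ℝ g) (f 2)) = c * (N 0 1 - N 1 0) := by
    rw [key 2]
    simp only [Fin.sum_univ_three, hz01, hz02, hz12, zero_mul, zero_add, add_zero]
    rw [hs01 (f 0) (f 2) (f 1), hs12 (f 0) (f 1) (f 2),
      hs01 (f 1) (f 2) (f 0), hs12 (f 1) (f 0) (f 2), hs01 (f 0) (f 1) (f 2)]
    ring
  -- the volume constant is nonzero
  have hc : c ≠ 0 := by
    intro h
    apply hvol
    apply Module.Basis.ext_alternating f
    intro v hv
    have hbij : Function.Bijective v := Finite.injective_iff_bijective.mp hv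
    let σ : Equiv.Perm (Fin 3) := Equiv.ofBijective v hbij
    have h1 : (fun i => f (v i)) = (⇑f ∘ ⇑σ) := rfl
    have h2 : (⇑f : Fin 3 → g) = ![f 0, f 1, f 2] := by
      funext k; fin_cases k <;> rfl
    rw [h1, vol.map_perm (⇑f) σ, h2, ← hcdef, h]
    simp
  constructor
  · -- symmetric → unimodular
    intro hL X
    have hNsym : ∀ i j, N i j = N j i := by
      intro i j
      show B (eb i) (L (eb j)) = B (eb j) (L (eb i))
      rw [← hL (eb i) (eb j), hsymm]
    have hbasis : ∀ a : Fin 3, LinearMap.trace ℝ g ((LieAlgebra.ad ℝ g) (f a)) = 0 := by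
      intro a
      fin_cases a
      · show LinearMap.trace ℝ g ((LieAlgebra.ad ℝ g) (f 0)) = 0
        rw [k0, hNsym 1 2]; ring
      · show LinearMap.trace ℝ g ((LieAlgebra.ad ℝ g) (f 1)) = 0
        rw [k1, hNsym 2 0]; ring
      · show LinearMap.trace ℝ g ((LieAlgebra.ad ℝ g) (f 2)) = 0
        rw [k2, hNsym 0 1]; ring
    let φ : g →ₗ[ℝ] ℝ := (LinearMap.trace ℝ g) ∘ₗ (LieAlgebra.ad ℝ g : g →ₗ[ℝ] Module.End ℝ g)
    have hφ : φ = 0 := f.ext fun a => by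
      simpa [φ] using hbasis a
    have := LinearMap.congr_fun hφ X
    simpa [φ] using this
  · -- unimodular → symmetric
    intro hU
    have e12 : N 1 2 = N 2 1 := by
      have := hU (f 0); rw [k0] at this
      have := mul_eq_zero.mp this
      rcases this with h | h
      · exact absurd h hc
      · linarith [h]
    have e20 : N 2 0 = N 0 2 := by
      have := hU (f 1); rw [k1] at this
      rcases mul_eq_zero.mp this with h | h
      · exact absurd h hc
      · linarith [h]
    have e01 : N 0 1 = N 1 0 := by
      have := hU (f 2); rw [k2] at this
      rcases mul_eq_zero.mp this with h | h
      · exact absurd h hc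
      · linarith [h]
    have hNsym : ∀ i j : Fin 3, N i j = N j i := by
      intro i j
      fin_cases i <;> fin_cases j
      · rfl
      · exact e01
      · exact e20.symm
      · exact e01.symm
      · rfl
      · exact e12
      · exact e20
      · exact e12.symm
      · rfl
    have hBL : (B ∘ₗ L) = B.compl₂ L := by
      apply LinearMap.ext_basis eb eb
      intro i j
      show B (L (eb i)) (eb j) = B (eb i) (L (eb j))
      rw [hsymm (L (eb i)) (eb j)]
      exact hNsym j i
    intro u v
    have := LinearMap.congr_fun₂ hBL u v
    simpa using this
end

section
/- Let V be a 3-dimensional oriented real vector space with nondegenerate symmetric bilinear form g, let × be the metric cross product, and let L be any g-symmetric endomorphism of V. Then the skew-symmetric bracket defined by [u,v] := L(u×v) satisfies the Jacobi identity, and the resulting Lie algebra is unimodular. -/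
/-!
STATEMENT 10: Let `V` be a 3-dimensional oriented real vector space with nondegenerate
symmetric bilinear form `B`, `cross` the metric cross product (`B(u × v, w) = vol(u,v,w)`
for a nonzero volume form `vol`), and `L` any `B`-symmetric endomorphism.  Then the
skew-symmetric bracket `[u,v] := L(u × v)` satisfies the Jacobi identity and the resulting
Lie algebra is unimodular (`tr(ad_X) = tr(L ∘ cross_X) = 0` for all `X`).
-/
set_option maxHeartbeats 4000000 in
theorem symmetric_L_gives_unimodular_lie_algebra
    {V : Type*} [AddCommGroup V] [Module ℝ V] [FiniteDimensional ℝ V]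
    (hdim : Module.finrank ℝ V = 3)
    (B : V →ₗ[ℝ] V →ₗ[ℝ] ℝ)
    (hsymm : ∀ u v, B u v = B v u)
    (hnd : ∀ u, (∀ v, B u v = 0) → u = 0)
    (vol : AlternatingMap ℝ V ℝ (Fin 3)) (hvol : vol ≠ 0)
    (cross : V →ₗ[ℝ] V →ₗ[ℝ] V)
    (hcross : ∀ u v w, B (cross u v) w = vol ![u, v, w])
    (L : V →ₗ[ℝ] V)
    (hL : ∀ u v, B (L u) v = B u (L v)) :
    (∀ u v w : V,
      L (cross u (L (cross v w))) + L (cross v (L (cross w u)))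
        + L (cross w (L (cross u v))) = 0) ∧
    (∀ X : V, LinearMap.trace ℝ V (L ∘ₗ cross X) = 0) := by
  classical
  have hBsymm : B.IsSymm := ⟨fun u v => by simpa using (hsymm u v)⟩
  obtain ⟨e0, he0⟩ := LinearMap.BilinForm.exists_orthogonal_basis hBsymm
  set e : Module.Basis (Fin 3) ℝ V := e0.reindex (finCongr hdim) with he
  have horth : ∀ i j : Fin 3, i ≠ j → B (e i) (e j) = 0 := by
    intro i j hij
    have hne : (finCongr hdim).symm i ≠ (finCongr hdim).symm j := by
      intro h; exact hij (by simpa using congrArg (finCongr hdim) h)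
    have := he0 hne
    simpa [he, Module.Basis.reindex_apply, LinearMap.IsOrtho, Function.onFun] using this
  have hrep : ∀ (x : V) (k : Fin 3), B x (e k) = e.repr x k * B (e k) (e k) := by
    intro x k
    conv_lhs => rw [← e.sum_repr x]
    rw [map_sum, LinearMap.sum_apply, Finset.sum_eq_single k]
    · simp [mul_comm]
    · intro b _ hb
      simp [horth b k hb]
    · simp
  have hdne : ∀ k, B (e k) (e k) ≠ 0 := by
    intro k hk
    refine e.ne_zero k (hnd _ ?_)
    intro v
    rw [hsymm, hrep v k, hk, mul_zero]
  have hzero : ∀ x : V, (∀ m, B x (e m) = 0) → x = 0 := by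
    intro x hx
    refine hnd _ ?_
    intro v
    conv_lhs => rw [← e.sum_repr v]
    rw [map_sum]
    simp [hx]
  have hexp : ∀ x : V, x = (B x (e 0) / B (e 0) (e 0)) • e 0
      + (B x (e 1) / B (e 1) (e 1)) • e 1 + (B x (e 2) / B (e 2) (e 2)) • e 2 := by
    intro x
    have h := e.sum_repr x
    rw [Fin.sum_univ_three] at h
    have hr : ∀ k, B x (e k) / B (e k) (e k) = e.repr x k := by
      intro k; rw [hrep x k, mul_div_assoc, div_self (hdne k), mul_one]
    rw [hr 0, hr 1, hr 2, h]
  -- update lemmas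
  have hupd0 : ∀ (x y z w : V), Function.update ![x,y,z] (0 : Fin 3) w = ![w,y,z] := by
    intro x y z w; funext i; fin_cases i <;> simp
  have hupd1 : ∀ (x y z w : V), Function.update ![x,y,z] (1 : Fin 3) w = ![x,w,z] := by
    intro x y z w; funext i; fin_cases i <;> simp
  have hupd2 : ∀ (x y z w : V), Function.update ![x,y,z] (2 : Fin 3) w = ![x,y,w] := by
    intro x y z w; funext i; fin_cases i <;> simp
  -- multilinearity in each slot
  have v0add : ∀ x x' y z : V, vol ![x + x', y, z] = vol ![x, y, z] + vol ![x', y, z] := by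
    intro x x' y z
    have h := vol.map_update_add ![x, y, z] 0 x x'
    simpa [hupd0] using h
  have v0smul : ∀ (r : ℝ) (x y z : V), vol ![r • x, y, z] = r * vol ![x, y, z] := by
    intro r x y z
    have h := vol.map_update_smul ![x, y, z] 0 r x
    simpa [hupd0] using h
  have v1add : ∀ x y y' z : V, vol ![x, y + y', z] = vol ![x, y, z] + vol ![x, y', z] := by
    intro x y y' z
    have h := vol.map_update_add ![x, y, z] 1 y y'
    simpa [hupd1] using h
  have v1smul : ∀ (r : ℝ) (x y z : V), vol ![x, r • y, z] = r * vol ![x, y, z] := by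
    intro r x y z
    have h := vol.map_update_smul ![x, y, z] 1 r y
    simpa [hupd1] using h
  have v2add : ∀ x y z z' : V, vol ![x, y, z + z'] = vol ![x, y, z] + vol ![x, y, z'] := by
    intro x y z z'
    have h := vol.map_update_add ![x, y, z] 2 z z'
    simpa [hupd2] using h
  have v2smul : ∀ (r : ℝ) (x y z : V), vol ![x, y, r • z] = r * vol ![x, y, z] := by
    intro r x y z
    have h := vol.map_update_smul ![x, y, z] 2 r z
    simpa [hupd2] using h
  have v1zero : ∀ x z : V, vol ![x, 0, z] = 0 := by
    intro x z; exact vol.map_coord_zero 1 (by simp)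
  -- vanishing on repeated entries
  have hrep01 : ∀ x z : V, vol ![x, x, z] = 0 := by
    intro x z; exact vol.map_eq_zero_of_eq ![x,x,z] (i := 0) (j := 1) (by simp) (by decide)
  have hrep02 : ∀ x y : V, vol ![x, y, x] = 0 := by
    intro x y; exact vol.map_eq_zero_of_eq ![x,y,x] (i := 0) (j := 2) (by simp) (by decide)
  have hrep12 : ∀ x y : V, vol ![x, y, y] = 0 := by
    intro x y; exact vol.map_eq_zero_of_eq ![x,y,y] (i := 1) (j := 2) (by simp) (by decide)
  -- swaps
  have hswap01 : ∀ x y z : V, vol ![y, x, z] = - vol ![x, y, z] := by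
    intro x y z
    have h := vol.map_swap (v := ![x,y,z]) (i := 0) (j := 1) (by decide)
    have hcomp : (![x,y,z] ∘ Equiv.swap (0 : Fin 3) 1) = ![y,x,z] := by
      funext i; fin_cases i <;> simp [Equiv.swap_apply_def]
    rwa [hcomp] at h
  have hswap12 : ∀ x y z : V, vol ![x, z, y] = - vol ![x, y, z] := by
    intro x y z
    have h := vol.map_swap (v := ![x,y,z]) (i := 1) (j := 2) (by decide)
    have hcomp : (![x,y,z] ∘ Equiv.swap (1 : Fin 3) 2) = ![x,z,y] := by
      funext i; fin_cases i <;> simp [Equiv.swap_apply_def]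
    rwa [hcomp] at h
  -- values on permuted basis triples
  have hw102 : vol ![e 1, e 0, e 2] = - vol ![e 0, e 1, e 2] := hswap01 _ _ _
  have hw021 : vol ![e 0, e 2, e 1] = - vol ![e 0, e 1, e 2] := hswap12 _ _ _
  have hw120 : vol ![e 1, e 2, e 0] = vol ![e 0, e 1, e 2] := by
    rw [hswap12 (e 1) (e 0) (e 2), hw102, neg_neg]
  have hw201 : vol ![e 2, e 0, e 1] = vol ![e 0, e 1, e 2] := by
    rw [hswap01 (e 0) (e 2) (e 1), hw021, neg_neg]
  have hw210 : vol ![e 2, e 1, e 0] = - vol ![e 0, e 1, e 2] := by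
    rw [hswap01 (e 1) (e 2) (e 0), hw120]
  -- cross product expansion
  have hcv : ∀ u v : V, cross u v = (vol ![u, v, e 0] / B (e 0) (e 0)) • e 0
      + (vol ![u, v, e 1] / B (e 1) (e 1)) • e 1
      + (vol ![u, v, e 2] / B (e 2) (e 2)) • e 2 := by
    intro u v
    conv_lhs => rw [hexp (cross u v)]
    simp only [hcross]
  -- package everything into opaque data
  obtain ⟨d, s, c, hd0, hd1, hd2, hs10, hs20, hs21, hLe, hRepr,
      hc00, hc01, hc02, hc10, hc11, hc12, hc20, hc21, hc22⟩ :
      ∃ (d : Fin 3 → ℝ) (s : Fin 3 → Fin 3 → ℝ) (c : ℝ),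
        d 0 ≠ 0 ∧ d 1 ≠ 0 ∧ d 2 ≠ 0 ∧
        s 1 0 = s 0 1 ∧ s 2 0 = s 0 2 ∧ s 2 1 = s 1 2 ∧
        (∀ b : Fin 3, L (e b) = (s 0 b / d 0) • e 0 + (s 1 b / d 1) • e 1 + (s 2 b / d 2) • e 2) ∧
        (∀ (x : V) (m : Fin 3), e.repr x m = B x (e m) / d m) ∧
        cross (e 0) (e 0) = 0 ∧
        cross (e 0) (e 1) = (c / d 2) • e 2 ∧
        cross (e 0) (e 2) = (-c / d 1) • e 1 ∧
        cross (e 1) (e 0) = (-c / d 2) • e 2 ∧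
        cross (e 1) (e 1) = 0 ∧
        cross (e 1) (e 2) = (c / d 0) • e 0 ∧
        cross (e 2) (e 0) = (c / d 1) • e 1 ∧
        cross (e 2) (e 1) = (-c / d 0) • e 0 ∧
        cross (e 2) (e 2) = 0 := by
    refine ⟨fun k => B (e k) (e k), fun a b => B (e a) (L (e b)), vol ![e 0, e 1, e 2],
      hdne 0, hdne 1, hdne 2,
      (hsymm _ _).trans (hL _ _), (hsymm _ _).trans (hL _ _), (hsymm _ _).trans (hL _ _),
      ?_, ?_, ?_, ?_, ?_, ?_, ?_, ?_, ?_, ?_, ?_⟩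
    · intro b
      conv_lhs => rw [hexp (L (e b))]
      rw [hsymm (L (e b)) (e 0), hsymm (L (e b)) (e 1), hsymm (L (e b)) (e 2)]
    · intro x m
      rw [hrep x m, mul_div_assoc, div_self (hdne m), mul_one]
    · rw [hcv]; simp [hrep01]
    · rw [hcv]; simp [hrep02, hrep12]
    · rw [hcv]; simp [hrep02, hrep12, hw021, neg_div]
    · rw [hcv]; simp [hrep02, hrep12, hw102, neg_div]
    · rw [hcv]; simp [hrep01]
    · rw [hcv]; simp [hrep02, hrep12, hw120]
    · rw [hcv]; simp [hrep02, hrep12, hw201]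
    · rw [hcv]; simp [hrep02, hrep12, hw210, neg_div]
    · rw [hcv]; simp [hrep01]
  have h3 : ∀ (P : Fin 3 → Prop), P 0 → P 1 → P 2 → ∀ i, P i := by
    intro P p0 p1 p2 i; fin_cases i <;> assumption
  have hterm : ∀ (a y x : V), B (L (cross a y)) x = vol ![a, y, L x] := by
    intro a y x; rw [hL, hcross]
  have key : ∀ i j k m : Fin 3,
      vol ![e i, L (cross (e j) (e k)), L (e m)]
        + vol ![e j, L (cross (e k) (e i)), L (e m)]
        + vol ![e k, L (cross (e i) (e j)), L (e m)] = 0 := by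
    refine h3 _ ?_ ?_ ?_ <;> refine h3 _ ?_ ?_ ?_ <;> refine h3 _ ?_ ?_ ?_ <;>
      refine h3 _ ?_ ?_ ?_
    all_goals simp only [hc00, hc01, hc02, hc10, hc11, hc12, hc20, hc21, hc22, map_zero,
      map_smul, hLe, v1zero, v1add, v1smul, v2add, v2smul, smul_smul, smul_add,
      hrep01, hrep02, hrep12, hw102, hw021, hw120, hw201, hw210, hs10, hs20, hs21]
    all_goals ring
  have jac_basis : ∀ i j k : Fin 3,
      L (cross (e i) (L (cross (e j) (e k)))) + L (cross (e j) (L (cross (e k) (e i))))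
        + L (cross (e k) (L (cross (e i) (e j)))) = 0 := by
    intro i j k
    apply hzero
    intro m
    have hk := key i j k m
    simp only [map_add, LinearMap.add_apply, hterm]
    exact hk
  have hJ : ∀ u v w : V,
      L (cross u (L (cross v w))) + L (cross v (L (cross w u)))
        + L (cross w (L (cross u v))) = 0 := by
    set F : V →ₗ[ℝ] V →ₗ[ℝ] V →ₗ[ℝ] V := LinearMap.mk₂ ℝ
      (fun u v => L ∘ₗ cross u ∘ₗ L ∘ₗ cross v + L ∘ₗ cross v ∘ₗ L ∘ₗ cross.flip u
        + L ∘ₗ cross.flip (L (cross u v)))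
      (by
        intro u u' v; ext w
        simp only [LinearMap.add_apply, LinearMap.comp_apply, LinearMap.flip_apply,
          map_add, LinearMap.add_apply]
        try abel)
      (by
        intro r u v; ext w
        simp only [LinearMap.add_apply, LinearMap.comp_apply, LinearMap.flip_apply,
          map_smul, LinearMap.smul_apply, smul_add]
        try abel)
      (by
        intro u v v'; ext w
        simp only [LinearMap.add_apply, LinearMap.comp_apply, LinearMap.flip_apply,
          map_add, LinearMap.add_apply]
        try abel)
      (by
        intro u r v; ext w
        simp only [LinearMap.add_apply, LinearMap.comp_apply, LinearMap.flip_apply,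
          map_smul, LinearMap.smul_apply, smul_add]
        try abel) with hFdef
    have hF0 : F = 0 := by
      apply e.ext; intro i
      apply e.ext; intro j
      apply e.ext; intro k
      simp only [hFdef, LinearMap.mk₂_apply, LinearMap.add_apply, LinearMap.comp_apply,
        LinearMap.flip_apply, LinearMap.zero_apply]
      exact jac_basis i j k
    intro u v w
    have h1 : F u v w = 0 := by rw [hF0]; simp
    simpa only [hFdef, LinearMap.mk₂_apply, LinearMap.add_apply, LinearMap.comp_apply,
      LinearMap.flip_apply] using h1
  refine ⟨hJ, ?_⟩
  intro X
  obtain ⟨x0, x1, x2, hX⟩ : ∃ a b c2 : ℝ, X = a • e 0 + b • e 1 + c2 • e 2 :=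
    ⟨e.repr X 0, e.repr X 1, e.repr X 2,
      (e.sum_repr X).symm.trans (by rw [Fin.sum_univ_three])⟩
  rw [LinearMap.trace_eq_matrix_trace ℝ e, Matrix.trace_fin_three]
  simp only [LinearMap.toMatrix_apply, LinearMap.comp_apply, hRepr, hterm]
  rw [hX]
  simp only [v0add, v0smul, hLe, v2add, v2smul, smul_smul, smul_add,
    hrep01, hrep02, hrep12, hw102, hw021, hw120, hw201, hw210, hs10, hs20, hs21]
  ring
end

section
/- The real solutions (α₁,α₂,α₃,h) of the system X₁Y₂+X₂Y₁ = X₁Y₃+X₃Y₁ = X₂Y₃+X₃Y₂ = 0, where X₁ = h−α₃+α₁−α₂, X₂ = h−α₁+α₂−α₃, X₃ = h−α₂+α₃−α₁ and Y₁ = h+α₃−α₁+α₂, Y₂ = h+α₁−α₂+α₃, Y₃ = h+α₂−α₃+α₁, are exactly: (i) α₁=α₂=α₃=−h; (ii) α₁=α₂=α₃=h; (iii) some permutation with α_{σ(1)}=α_{σ(2)}, h=α_{σ(3)}=0; and no solution has exactly one of X₁,X₂,X₃ equal to zero with the other two nonzero. -/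
/-!
Writing `X₁ = (h + (α₁ - α₂)) - α₃` and `Y₂ = (h + (α₁ - α₂)) + α₃`, and similarly for the other
factors, each equation `X_i Y_j + X_j Y_i = 0` becomes `h² + (α_i - α_j)² = α_k²`. Differences of
these three equations factor as `(α₁ - α₂)(α₁ + α₂ - α₃) = 0` and `(α₂ - α₃)(α₂ + α₃ - α₁) = 0`,
and each of the four resulting cases forces one of the listed solutions. On solutions (i) and (ii)
the three `X_i` are equal, and on solutions (iii) two of them vanish.
-/

section PythagoreanSystem

variable {K : Type*} [Field K] [CharZero K]

theorem xy_system_iff_pythagorean (a b c h : K) :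
    ((h - c + a - b) * (h + a - b + c) + (h - a + b - c) * (h + c - a + b) = 0 ∧
      (h - c + a - b) * (h + b - c + a) + (h - b + c - a) * (h + c - a + b) = 0 ∧
      (h - a + b - c) * (h + b - c + a) + (h - b + c - a) * (h + a - b + c) = 0) ↔
    (h ^ 2 + (a - b) ^ 2 = c ^ 2 ∧ h ^ 2 + (a - c) ^ 2 = b ^ 2 ∧ h ^ 2 + (b - c) ^ 2 = a ^ 2) := by
  refine and_congr ?_ (and_congr ?_ ?_) <;>
    exact ⟨fun e ↦ by linear_combination e / 2, fun e ↦ by linear_combination 2 * e⟩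

theorem pythagorean_system_iff (a b c h : K) :
    (h ^ 2 + (a - b) ^ 2 = c ^ 2 ∧ h ^ 2 + (a - c) ^ 2 = b ^ 2 ∧ h ^ 2 + (b - c) ^ 2 = a ^ 2) ↔
      ((a = b ∧ b = c ∧ c = -h) ∨ (a = b ∧ b = c ∧ c = h) ∨
        (a = b ∧ h = 0 ∧ c = 0) ∨ (b = c ∧ h = 0 ∧ a = 0) ∨ (c = a ∧ h = 0 ∧ b = 0)) := by
  constructor
  · rintro ⟨e₁, e₂, e₃⟩
    have hab : (a - b) * (a + b - c) = 0 := by linear_combination (e₂ - e₃) / 2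
    have hbc : (b - c) * (b + c - a) = 0 := by linear_combination (e₁ - e₂) / 2
    rcases mul_eq_zero.mp hab with hab | hab <;> rcases mul_eq_zero.mp hbc with hbc | hbc
    · obtain rfl := sub_eq_zero.mp hab
      obtain rfl := sub_eq_zero.mp hbc
      have : a ^ 2 = h ^ 2 := by linear_combination -e₁
      rcases sq_eq_sq_iff_eq_or_eq_neg.mp this with rfl | rfl <;> simp
    · obtain rfl := sub_eq_zero.mp hab
      obtain rfl : c = 0 := by linear_combination hbc
      have : h ^ 2 = 0 := by linear_combination e₁
      simp [pow_eq_zero_iff two_ne_zero |>.mp this]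
    · obtain rfl := sub_eq_zero.mp hbc
      obtain rfl : a = 0 := by linear_combination hab
      have : h ^ 2 = 0 := by linear_combination e₃
      simp [pow_eq_zero_iff two_ne_zero |>.mp this]
    · obtain rfl : b = 0 := by
        have : (2 : K) * b = 0 := by linear_combination hab + hbc
        simpa [two_ne_zero] using this
      obtain rfl : c = a := by linear_combination -hab
      have : h ^ 2 = 0 := by linear_combination e₂
      simp [pow_eq_zero_iff two_ne_zero |>.mp this]
  · rintro (⟨rfl, rfl, rfl⟩ | ⟨rfl, rfl, rfl⟩ | ⟨rfl, rfl, rfl⟩ | ⟨rfl, rfl, rfl⟩ | ⟨rfl, rfl, rfl⟩) <;>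
      refine ⟨by ring, by ring, by ring⟩

end PythagoreanSystem

theorem not_exactly_one_eq_zero_of_solution {R : Type*} [CommRing R] {a b c h : R}
    (hs : (a = b ∧ b = c ∧ c = -h) ∨ (a = b ∧ b = c ∧ c = h) ∨
      (a = b ∧ h = 0 ∧ c = 0) ∨ (b = c ∧ h = 0 ∧ a = 0) ∨ (c = a ∧ h = 0 ∧ b = 0)) :
    ¬ ((h - c + a - b = 0 ∧ h - a + b - c ≠ 0 ∧ h - b + c - a ≠ 0) ∨
      (h - a + b - c = 0 ∧ h - c + a - b ≠ 0 ∧ h - b + c - a ≠ 0) ∨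
      (h - b + c - a = 0 ∧ h - c + a - b ≠ 0 ∧ h - a + b - c ≠ 0)) := by
  rcases hs with ⟨rfl, rfl, rfl⟩ | ⟨rfl, rfl, rfl⟩ | ⟨rfl, rfl, rfl⟩ | ⟨rfl, rfl, rfl⟩ | ⟨rfl, rfl, rfl⟩ <;>
    ring_nf <;> tauto

theorem XY_system_solutions (α₁ α₂ α₃ h : ℝ) :
    let X₁ := h - α₃ + α₁ - α₂
    let X₂ := h - α₁ + α₂ - α₃
    let X₃ := h - α₂ + α₃ - α₁
    let Y₁ := h + α₃ - α₁ + α₂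
    let Y₂ := h + α₁ - α₂ + α₃
    let Y₃ := h + α₂ - α₃ + α₁
    ((X₁ * Y₂ + X₂ * Y₁ = 0 ∧ X₁ * Y₃ + X₃ * Y₁ = 0 ∧ X₂ * Y₃ + X₃ * Y₂ = 0) ↔
      ((α₁ = α₂ ∧ α₂ = α₃ ∧ α₃ = -h) ∨
       (α₁ = α₂ ∧ α₂ = α₃ ∧ α₃ = h) ∨
       (α₁ = α₂ ∧ h = 0 ∧ α₃ = 0) ∨
       (α₂ = α₃ ∧ h = 0 ∧ α₁ = 0) ∨
       (α₃ = α₁ ∧ h = 0 ∧ α₂ = 0))) ∧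
    ((X₁ * Y₂ + X₂ * Y₁ = 0 ∧ X₁ * Y₃ + X₃ * Y₁ = 0 ∧ X₂ * Y₃ + X₃ * Y₂ = 0) →
      ¬ ((X₁ = 0 ∧ X₂ ≠ 0 ∧ X₃ ≠ 0) ∨
         (X₂ = 0 ∧ X₁ ≠ 0 ∧ X₃ ≠ 0) ∨
         (X₃ = 0 ∧ X₁ ≠ 0 ∧ X₂ ≠ 0))) := by
  intro X₁ X₂ X₃ Y₁ Y₂ Y₃
  have solutions := (xy_system_iff_pythagorean α₁ α₂ α₃ h).trans (pythagorean_system_iff α₁ α₂ α₃ h)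
  exact ⟨solutions, fun hs ↦ not_exactly_one_eq_zero_of_solution (solutions.mp hs)⟩
end

section
/- Let λ, μ, ν, ρ be real numbers with λ + ρ ≠ 0 (where all ε signs are +1,+1,−1 indefinite setting), satisfying μ = ν and 2μ² = λ² + ρ², arising as the entries of the restriction M = [[λ', μ'],[ν', ρ']] (suitably normalized) of ad_{v₂} to the unimodular kernel. If additionally M is required to be a symmetric 2×2 matrix with respect to an indefinite plane metric, then M must be conjugate by an isometry to θ·[[1,−1],[1,1]] or θ·[[1,1],[−1,1]] for some θ ≠ 0; in particular M has complex eigenvalues (1±i)θ. -/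
/-!
Write `M = θ I + N` with `θ = (λ + ρ)/2` and `N = [[a, μ], [-μ, -a]]`, `a = (λ - ρ)/2`. The
Einstein condition says `μ² = θ² + a²`, i.e. `N² = -θ² I`, so a hyperbolic rotation
`[[c, s], [s, c]]` (an `η`-isometry) conjugates `N` to `κ [[0, 1], [-1, 0]]` with `κ = ±θ`.
One may take `(c, s)` proportional to `(μ + κ, -a)`, whose `η`-norm is
`(μ + κ)² - a² = 2κ(μ + κ)`; choosing the sign of `κ` to make this positive avoids any
degenerate case.
-/

open Matrix

local notation "η" => !![(1 : ℝ), 0; 0, -1]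

lemma hyperbolic_rotation_isometry (c s : ℝ) (h : c ^ 2 - s ^ 2 = 1) :
    (!![c, s; s, c])ᵀ * η * !![c, s; s, c] = η := by
  ext i j
  fin_cases i <;> fin_cases j <;> simp [mul_apply, Fin.sum_univ_two] <;>
    first | ring1 | linear_combination h | linear_combination -h

lemma mul_hyperbolic_rotation_eq (θ a μ κ t : ℝ) (h : μ ^ 2 = κ ^ 2 + a ^ 2) :
    !![θ + a, μ; -μ, θ - a] * !![t * (μ + κ), -(t * a); -(t * a), t * (μ + κ)] =
      !![t * (μ + κ), -(t * a); -(t * a), t * (μ + κ)] * !![θ, κ; -κ, θ] := by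
  ext i j
  fin_cases i <;> fin_cases j <;> simp [mul_apply, Fin.sum_univ_two] <;>
    first | ring1 | linear_combination t * h | linear_combination -t * h

lemma exists_eq_or_eq_neg_and_mul_add_pos (θ μ : ℝ) (hθ : θ ≠ 0) :
    ∃ κ, (κ = θ ∨ κ = -θ) ∧ 0 < κ * (μ + κ) := by
  rcases le_or_gt 0 (θ * μ) with h | h
  · exact ⟨θ, Or.inl rfl, by nlinarith [sq_pos_of_ne_zero hθ]⟩
  · exact ⟨-θ, Or.inr rfl, by nlinarith [sq_pos_of_ne_zero hθ]⟩

theorem exists_isometry_mul_eq_mul_rotation (θ a μ : ℝ) (hθ : θ ≠ 0)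
    (h : μ ^ 2 = θ ^ 2 + a ^ 2) :
    ∃ κ, (κ = θ ∨ κ = -θ) ∧ ∃ P : Matrix (Fin 2) (Fin 2) ℝ,
      Pᵀ * η * P = η ∧ !![θ + a, μ; -μ, θ - a] * P = P * !![θ, κ; -κ, θ] := by
  obtain ⟨κ, hκ, hpos⟩ := exists_eq_or_eq_neg_and_mul_add_pos θ μ hθ
  have hκsq : κ ^ 2 = θ ^ 2 := by rcases hκ with rfl | rfl <;> ring
  have hD : 0 < (μ + κ) ^ 2 - a ^ 2 := by
    rw [show (μ + κ) ^ 2 - a ^ 2 = 2 * (κ * (μ + κ)) by linear_combination h - hκsq]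
    positivity
  set t := (√((μ + κ) ^ 2 - a ^ 2))⁻¹
  have ht : t ^ 2 * ((μ + κ) ^ 2 - a ^ 2) = 1 := by
    rw [inv_pow, Real.sq_sqrt hD.le, inv_mul_cancel₀ hD.ne']
  refine ⟨κ, hκ, _, hyperbolic_rotation_isometry _ _ ?_,
    mul_hyperbolic_rotation_eq θ a μ κ t ?_⟩
  · linear_combination ht
  · linear_combination h - hκsq

theorem einstein_nonunimodular_normal_form_general
    (lam mu nu rho : ℝ)
    (htr : lam + rho ≠ 0)
    (hμν : mu = nu)
    (heq : 2 * mu ^ 2 = lam ^ 2 + rho ^ 2) :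
    ∃ θ : ℝ, θ ≠ 0 ∧
      (∃ P : Matrix (Fin 2) (Fin 2) ℝ,
        Pᵀ * (!![(1:ℝ), 0; 0, -1]) * P = !![(1:ℝ), 0; 0, -1] ∧
        ((!![lam, mu; -nu, rho]) * P = P * (θ • !![(1:ℝ), -1; 1, 1]) ∨
         (!![lam, mu; -nu, rho]) * P = P * (θ • !![(1:ℝ), 1; -1, 1]))) ∧
      Matrix.trace (!![lam, mu; -nu, rho]) = 2 * θ ∧
      Matrix.det (!![lam, mu; -nu, rho]) = 2 * θ ^ 2 := by
  subst hμν
  obtain ⟨θ, a, rfl, rfl⟩ : ∃ θ a, lam = θ + a ∧ rho = θ - a :=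
    ⟨(lam + rho) / 2, (lam - rho) / 2, by ring, by ring⟩
  have hθ : θ ≠ 0 := fun h => htr (by linear_combination 2 * h)
  have hsq : mu ^ 2 = θ ^ 2 + a ^ 2 := by linear_combination heq / 2
  obtain ⟨κ, hκ, P, hP, hMP⟩ := exists_isometry_mul_eq_mul_rotation θ a mu hθ hsq
  refine ⟨θ, hθ, ⟨P, hP, ?_⟩, by simp [trace_fin_two_of]; ring,
    by simp [det_fin_two_of]; linear_combination hsq⟩
  rcases hκ with rfl | rfl
  · exact Or.inr (by simpa using hMP)
  · exact Or.inl (by simpa using hMP)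

theorem einstein_nonunimodular_normal_form
    (lam mu nu rho : ℝ)
    (htr : lam + rho ≠ 0)
    (hμν : mu = nu)
    (heq : 2 * mu ^ 2 = lam ^ 2 + rho ^ 2)
    (hsym : ((!![(1:ℝ), 0; 0, -1]) * (!![lam, mu; -nu, rho]))ᵀ
          = (!![(1:ℝ), 0; 0, -1]) * (!![lam, mu; -nu, rho])) :
    ∃ θ : ℝ, θ ≠ 0 ∧
      (∃ P : Matrix (Fin 2) (Fin 2) ℝ,
        Pᵀ * (!![(1:ℝ), 0; 0, -1]) * P = !![(1:ℝ), 0; 0, -1] ∧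
        ((!![lam, mu; -nu, rho]) * P = P * (θ • !![(1:ℝ), -1; 1, 1]) ∨
         (!![lam, mu; -nu, rho]) * P = P * (θ • !![(1:ℝ), 1; -1, 1]))) ∧
      Matrix.trace (!![lam, mu; -nu, rho]) = 2 * θ ∧
      Matrix.det (!![lam, mu; -nu, rho]) = 2 * θ ^ 2 :=
  einstein_nonunimodular_normal_form_general lam mu nu rho htr hμν heq
end

section
/- Rescaling covariance of the generalized Ricci tensor: for structure constants κ'_{abc} = εμ·κ_{abc} and 3-form coefficients H'_{abc} = εμ·H_{abc} (ε = ±1, μ > 0) in ε-rescaled orthonormal bases, the Dorfman coefficients satisfy B'_{ABC} = εμ·B_{ABC} and (B')^C_{AB} = μ·B^C_{AB}, hence the Ricci components satisfy Ric'(e'_A, e'_B) = μ² Ric(e_A, e_B) when the divergence rescales as δ' = μδ. Consequently (G, H, 𝒢_g, δ) is generalized Einstein iff (G, εμ^{-2}H, 𝒢_{εμ^{-2}g}, μδ) is. -/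
/-!
`Bp` and `Bm` are linear in `(κ, H)`, so they scale by `σ m`. Every term of the Ricci
components carries two factors `m` (from two `B`'s, or from one `B` and one `δ`) and an even
number of factors `σ` (from the `B`'s and the rescaled signs `σ ε`), so `σ ^ 2 = 1` leaves
`m ^ 2`. Since `m ≠ 0`, the vanishing of the Ricci tensor is unaffected.
-/

namespace Rescaling

noncomputable def Bp {n : ℕ} (κ H : Fin n → Fin n → Fin n → ℝ) (a j k : Fin n) : ℝ :=
  (H a j k - κ a j k + κ j k a - κ k a j) / 2

noncomputable def Bm {n : ℕ} (κ H : Fin n → Fin n → Fin n → ℝ) (i b c : Fin n) : ℝ :=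
  (H i b c + κ i b c - κ b c i + κ c i b) / 2

/-- `R^δ_{ia}`, the `E₋ ⊗ E₊` Ricci component with divergence term. -/
noncomputable def Ricp {n : ℕ} (ε : Fin n → ℝ) (κ H : Fin n → Fin n → Fin n → ℝ)
    (δp : Fin n → ℝ) (i a : Fin n) : ℝ :=
  (∑ b : Fin n, ∑ j : Fin n, Bp κ H b i j * Bm κ H j a b * ε j * ε b)
    + ∑ c : Fin n, ε c * Bm κ H i a c * δp c

/-- `R^δ_{ai}`, the `E₊ ⊗ E₋` Ricci component with divergence term. -/
noncomputable def Ricm {n : ℕ} (ε : Fin n → ℝ) (κ H : Fin n → Fin n → Fin n → ℝ)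
    (δm : Fin n → ℝ) (a i : Fin n) : ℝ :=
  (∑ b : Fin n, ∑ j : Fin n, Bp κ H b i j * Bm κ H j a b * ε j * ε b)
    - ∑ j : Fin n, ε j * Bp κ H a i j * δm j

theorem Bp_const_mul {n : ℕ} (κ H : Fin n → Fin n → Fin n → ℝ) (c : ℝ) (a j k : Fin n) :
    Bp (fun x y z => c * κ x y z) (fun x y z => c * H x y z) a j k = c * Bp κ H a j k := by
  simp only [Bp]
  ring

theorem Bm_const_mul {n : ℕ} (κ H : Fin n → Fin n → Fin n → ℝ) (c : ℝ) (i b d : Fin n) :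
    Bm (fun x y z => c * κ x y z) (fun x y z => c * H x y z) i b d = c * Bm κ H i b d := by
  simp only [Bm]
  ring

section Rescale

variable {n : ℕ} (ε : Fin n → ℝ) (κ H : Fin n → Fin n → Fin n → ℝ) {σ : ℝ} (m : ℝ)

theorem sum_Bp_mul_Bm_rescale (hσ : σ ^ 2 = 1) (i a : Fin n) :
    ∑ b : Fin n, ∑ j : Fin n,
        Bp (fun x y z => σ * m * κ x y z) (fun x y z => σ * m * H x y z) b i j *
          Bm (fun x y z => σ * m * κ x y z) (fun x y z => σ * m * H x y z) j a b *
          (σ * ε j) * (σ * ε b)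
      = m ^ 2 * ∑ b : Fin n, ∑ j : Fin n, Bp κ H b i j * Bm κ H j a b * ε j * ε b := by
  simp only [Bp_const_mul, Bm_const_mul, Finset.mul_sum]
  refine Finset.sum_congr rfl fun b _ => Finset.sum_congr rfl fun j _ => ?_
  linear_combination (m ^ 2 * Bp κ H b i j * Bm κ H j a b * ε j * ε b * (σ ^ 2 + 1)) * hσ

theorem Ricp_rescale (δp : Fin n → ℝ) (hσ : σ ^ 2 = 1) (i a : Fin n) :
    Ricp (fun x => σ * ε x) (fun x y z => σ * m * κ x y z) (fun x y z => σ * m * H x y z)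
        (fun x => m * δp x) i a = m ^ 2 * Ricp ε κ H δp i a := by
  rw [Ricp, Ricp, sum_Bp_mul_Bm_rescale ε κ H m hσ, mul_add]
  congr 1
  rw [Finset.mul_sum]
  refine Finset.sum_congr rfl fun c _ => ?_
  rw [Bm_const_mul]
  linear_combination (m ^ 2 * ε c * Bm κ H i a c * δp c) * hσ

theorem Ricm_rescale (δm : Fin n → ℝ) (hσ : σ ^ 2 = 1) (a i : Fin n) :
    Ricm (fun x => σ * ε x) (fun x y z => σ * m * κ x y z) (fun x y z => σ * m * H x y z)
        (fun x => m * δm x) a i = m ^ 2 * Ricm ε κ H δm a i := by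
  rw [Ricm, Ricm, sum_Bp_mul_Bm_rescale ε κ H m hσ, mul_sub]
  congr 1
  rw [Finset.mul_sum]
  refine Finset.sum_congr rfl fun j _ => ?_
  rw [Bp_const_mul]
  linear_combination (m ^ 2 * ε j * Bp κ H a i j * δm j) * hσ

end Rescale

theorem ricci_rescaling_covariance_general {n : ℕ}
    (ε : Fin n → ℝ) (κ H : Fin n → Fin n → Fin n → ℝ) (δp δm : Fin n → ℝ)
    (σ m : ℝ) (hσ : σ = 1 ∨ σ = -1) (hm : 0 < m) :
    (∀ a j k, Bp (fun x y z => σ * m * κ x y z) (fun x y z => σ * m * H x y z) a j k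
        = σ * m * Bp κ H a j k) ∧
    (∀ i b c, Bm (fun x y z => σ * m * κ x y z) (fun x y z => σ * m * H x y z) i b c
        = σ * m * Bm κ H i b c) ∧
    (∀ i a, Ricp (fun x => σ * ε x)
        (fun x y z => σ * m * κ x y z) (fun x y z => σ * m * H x y z)
        (fun x => m * δp x) i a = m ^ 2 * Ricp ε κ H δp i a) ∧
    (∀ a i, Ricm (fun x => σ * ε x)
        (fun x y z => σ * m * κ x y z) (fun x y z => σ * m * H x y z)
        (fun x => m * δm x) a i = m ^ 2 * Ricm ε κ H δm a i) ∧
    ((∀ i a : Fin n, Ricp ε κ H δp i a = 0 ∧ Ricm ε κ H δm a i = 0) ↔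
      (∀ i a : Fin n,
        Ricp (fun x => σ * ε x)
          (fun x y z => σ * m * κ x y z) (fun x y z => σ * m * H x y z)
          (fun x => m * δp x) i a = 0 ∧
        Ricm (fun x => σ * ε x)
          (fun x y z => σ * m * κ x y z) (fun x y z => σ * m * H x y z)
          (fun x => m * δm x) a i = 0)) := by
  have hσ2 : σ ^ 2 = 1 := by rcases hσ with rfl | rfl <;> norm_num
  have hm2 : m ^ 2 ≠ 0 := pow_ne_zero 2 hm.ne'
  refine ⟨fun _ _ _ => Bp_const_mul κ H _ _ _ _, fun _ _ _ => Bm_const_mul κ H _ _ _ _,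
    Ricp_rescale ε κ H m δp hσ2, Ricm_rescale ε κ H m δm hσ2, ?_⟩
  simp only [Ricp_rescale ε κ H m δp hσ2, Ricm_rescale ε κ H m δm hσ2, mul_eq_zero, hm2,
    false_or]

theorem ricci_rescaling_covariance {n : ℕ}
    (ε : Fin n → ℝ) (κ H : Fin n → Fin n → Fin n → ℝ) (δp δm : Fin n → ℝ)
    (hε : ∀ a, ε a = 1 ∨ ε a = -1)
    (σ m : ℝ) (hσ : σ = 1 ∨ σ = -1) (hm : 0 < m) :
    (∀ a j k, Bp (fun x y z => σ * m * κ x y z) (fun x y z => σ * m * H x y z) a j k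
        = σ * m * Bp κ H a j k) ∧
    (∀ i b c, Bm (fun x y z => σ * m * κ x y z) (fun x y z => σ * m * H x y z) i b c
        = σ * m * Bm κ H i b c) ∧
    (∀ i a, Ricp (fun x => σ * ε x)
        (fun x y z => σ * m * κ x y z) (fun x y z => σ * m * H x y z)
        (fun x => m * δp x) i a = m ^ 2 * Ricp ε κ H δp i a) ∧
    (∀ a i, Ricm (fun x => σ * ε x)
        (fun x y z => σ * m * κ x y z) (fun x y z => σ * m * H x y z)
        (fun x => m * δm x) a i = m ^ 2 * Ricm ε κ H δm a i) ∧
    ((∀ i a : Fin n, Ricp ε κ H δp i a = 0 ∧ Ricm ε κ H δm a i = 0) ↔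
      (∀ i a : Fin n,
        Ricp (fun x => σ * ε x)
          (fun x y z => σ * m * κ x y z) (fun x y z => σ * m * H x y z)
          (fun x => m * δp x) i a = 0 ∧
        Ricm (fun x => σ * ε x)
          (fun x y z => σ * m * κ x y z) (fun x y z => σ * m * H x y z)
          (fun x => m * δm x) a i = 0)) :=
  ricci_rescaling_covariance_general ε κ H δp δm σ m hσ hm

end Rescaling
end
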